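/- arXiv:2404.00146 — 6 statements merged into one kernel-verified Lean document; each statement's English description precedes it below -/
import Mathlib

section
/- Consider the BSR iteration with block size c run for ⌈k/c⌉ iterations, and assume c·⌈k/c⌉ ≤ d and that the columns of Φ_opt are linearly independent. If for every iteration t = 1,…,⌈k/c⌉ with r^{t−1} ≠ 0 the greedy-choice condition ρ_c(r^{t−1}) < 1 holds, then all optimal indices are selected within ⌈k/c⌉ iterations, i.e., Λ_opt ⊆ Γ^{⌈k/c⌉}, and the final residual satisfies r^{⌈k/c⌉} = 0; in other words, BSR exactly recovers the k-sparse signal x within ⌈k/c⌉ iterations. -/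
open Finset Matrix

private lemma span_col_repr {N d : ℕ} (Φ : Matrix (Fin N) (Fin d) ℝ) (S : Finset (Fin d))
    {w : Fin N → ℝ}
    (hw : w ∈ Submodule.span ℝ {v : Fin N → ℝ | ∃ j ∈ S, v = fun i => Φ i j}) :
    ∃ a : Fin d → ℝ, w = ∑ j ∈ S, a j • (fun i => Φ i j) := by
  induction hw using Submodule.span_induction with
  | mem v hv =>
      obtain ⟨j, hj, rfl⟩ := hv
      refine ⟨fun j' => if j' = j then 1 else 0, ?_⟩
      rw [Finset.sum_eq_single j]
      · simp
      · intro b _ hb; simp [hb]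
      · intro h; exact absurd hj h
  | zero => exact ⟨0, by simp⟩
  | add u v _ _ hu hv =>
      obtain ⟨a, ha⟩ := hu; obtain ⟨b, hb⟩ := hv
      refine ⟨a + b, ?_⟩
      rw [ha, hb, ← Finset.sum_add_distrib]
      exact Finset.sum_congr rfl fun j _ => (add_smul _ _ _).symm
  | smul t v _ hv =>
      obtain ⟨a, ha⟩ := hv
      refine ⟨fun j => t * a j, ?_⟩
      rw [ha, Finset.smul_sum]
      exact Finset.sum_congr rfl fun j _ => smul_smul _ _ _

private lemma li_coeff_zero {N d : ℕ} (Φ : Matrix (Fin N) (Fin d) ℝ) (Λopt : Finset (Fin d))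
    (hli : LinearIndependent ℝ (fun j : {j // j ∈ Λopt} => fun i => Φ i j.val))
    (g : Fin d → ℝ)
    (hg : ∑ j ∈ Λopt, g j • (fun i => Φ i j) = (0 : Fin N → ℝ)) :
    ∀ j ∈ Λopt, g j = 0 := by
  intro j hj
  have h := Fintype.linearIndependent_iff.mp hli (fun j => g j.val)
  have hs : ∑ i : {j // j ∈ Λopt}, g i.val • (fun i2 => Φ i2 i.val) = (0 : Fin N → ℝ) := by
    rw [Finset.sum_coe_sort Λopt (fun j => g j • (fun i => Φ i j))]
    exact hg
  exact h hs ⟨j, hj⟩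

/-- **Theorem 1 (the strong exact recovery condition for BSR).**
If `ρ_c(r^{t-1}) < 1` holds at every iteration (with nonzero residual), then BSR
recovers the `k`-sparse signal within `⌈k/c⌉` iterations: all optimal indices are
selected and the final residual is zero. -/
theorem bsr_strong_exact_recovery
    (N d k c : ℕ) (hk : 1 ≤ k) (hc1 : 1 ≤ c) (hck : c ≤ k)
    (hcd : c * ((k + c - 1) / c) ≤ d)
    (Φ : Matrix (Fin N) (Fin d) ℝ)
    (hunit : ∀ j, ∑ i, Φ i j ^ 2 = 1)
    (x : Fin d → ℝ) (Λopt : Finset (Fin d))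
    (hΛ : ∀ j, j ∈ Λopt ↔ x j ≠ 0)
    (hΛcard : Λopt.card = k)
    (y : Fin N → ℝ) (hy : y = Φ.mulVec x)
    -- the columns of Φ_opt are linearly independent
    (hli : LinearIndependent ℝ (fun j : {j // j ∈ Λopt} => fun i => Φ i j.val))
    -- the BSR iteration: blocks `Γblk t`, cumulative index sets `Γcum t`, residuals `r t`
    (Γblk Γcum : ℕ → Finset (Fin d)) (r : ℕ → Fin N → ℝ)
    (hΓ0 : Γcum 0 = ∅) (hr0 : r 0 = y)
    (hstep : ∀ t, 1 ≤ t → t ≤ (k + c - 1) / c →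
      Γblk t ⊆ Finset.univ \ Γcum (t - 1) ∧ (Γblk t).card = c ∧
      (∀ Ω : Finset (Fin d), Ω ⊆ Finset.univ \ Γcum (t - 1) → Ω.card = c →
        Real.sqrt (∑ j ∈ Ω, (∑ i, Φ i j * r (t - 1) i) ^ 2) ≤
          Real.sqrt (∑ j ∈ Γblk t, (∑ i, Φ i j * r (t - 1) i) ^ 2)) ∧
      Γcum t = Γcum (t - 1) ∪ Γblk t ∧
      -- `r t = y - P^t y` for the orthogonal projection `P^t` onto the span of the
      -- selected columns: `y - r t` lies in the span and `r t` is orthogonal to it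
      (y - r t) ∈ Submodule.span ℝ
        {v : Fin N → ℝ | ∃ j ∈ Γcum t, v = fun i => Φ i j} ∧
      (∀ j ∈ Γcum t, ∑ i, Φ i j * r t i = 0))
    -- the greedy-choice condition `ρ_c(r^{t-1}) < 1` at every iteration with `r^{t-1} ≠ 0`
    (hρ : ∀ t, 1 ≤ t → t ≤ (k + c - 1) / c → r (t - 1) ≠ 0 →
      ∀ Ω1 : Finset (Fin d), Ω1.card = c →
        (∃ Ω : Finset (Fin d), Ω.card = c ∧
          (Ω1 ∩ Λopt).card < (Ω ∩ Λopt).card) →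
        ∃ Ω2 : Finset (Fin d), Ω2.card = c ∧
          (Ω1 ∩ Λopt).card < (Ω2 ∩ Λopt).card ∧
          Real.sqrt (∑ j ∈ Ω1, (∑ i, Φ i j * r (t - 1) i) ^ 2) <
            Real.sqrt (∑ j ∈ Ω2, (∑ i, Φ i j * r (t - 1) i) ^ 2)) :
    Λopt ⊆ Γcum ((k + c - 1) / c) ∧ r ((k + c - 1) / c) = 0 := by
  set T := (k + c - 1) / c with hTdef
  -- basic arithmetic facts
  have harith : k ≤ c * T ∧ c * T ≤ k + c - 1 := by
    have h1 : c * T + (k + c - 1) % c = k + c - 1 := Nat.div_add_mod (k + c - 1) c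
    have h2 : (k + c - 1) % c < c := Nat.mod_lt _ (by omega)
    obtain ⟨M, hM⟩ : ∃ M, M = c * T := ⟨_, rfl⟩
    obtain ⟨m, hm⟩ : ∃ m, m = (k + c - 1) % c := ⟨_, rfl⟩
    rw [← hM, ← hm] at h1
    rw [← hm] at h2
    rw [← hM]
    omega
  obtain ⟨hkT, hTk⟩ := harith
  have hT1 : 1 ≤ T := (Nat.one_le_div_iff (by omega)).mpr (by omega)
  -- `y` as a combination of the optimal columns
  have hyx : y = ∑ j ∈ Λopt, x j • (fun i => Φ i j) := by
    funext i
    have h1 : (∑ j ∈ Λopt, x j • (fun i => Φ i j)) i = ∑ j ∈ Λopt, x j * Φ i j := by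
      rw [Finset.sum_apply]; simp
    have h2 : ∑ j ∈ Λopt, x j * Φ i j = ∑ j, x j * Φ i j :=
      Finset.sum_subset (Finset.subset_univ _) (fun j _ hj => by
        have hx0 : x j = 0 := by by_contra h; exact hj ((hΛ j).mpr h)
        simp [hx0])
    rw [h1, h2, hy]
    simp [Matrix.mulVec, dotProduct, mul_comm]
  -- the main invariant
  have key : ∀ t, t ≤ T → (Λopt ⊆ Γcum t ∨ (Γcum t ⊆ Λopt ∧ (Γcum t).card = c * t)) := by
    intro t
    induction t with
    | zero =>
        intro _
        refine Or.inr ⟨?_, ?_⟩ <;> simp [hΓ0]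
    | succ n ih =>
        intro hn1
        have hnT : n ≤ T := by omega
        obtain ⟨hblk_sub, hblk_card, hgreedy, hcum, hspan, horth⟩ :=
          hstep (n + 1) (by omega) hn1
        simp only [Nat.add_sub_cancel] at hblk_sub hgreedy hcum
        rcases ih hnT with hL | ⟨hsub, hcard⟩
        · left
          rw [hcum]
          exact hL.trans Finset.subset_union_left
        · -- arithmetic
          have hcn1 : c * n + c ≤ c * T := by
            have h := Nat.mul_le_mul_left c hn1
            rwa [Nat.mul_succ] at h
          have hcnk : c * n < k := by
            have h := le_trans hcn1 hTk
            have h2 : c * n + c < k + c := lt_of_le_of_lt h (by omega)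
            exact Nat.lt_of_add_lt_add_right h2
          -- orthogonality of previous residual to already selected columns
          have horthn : ∀ j ∈ Γcum n, ∑ i, Φ i j * r n i = 0 := by
            rcases Nat.eq_zero_or_pos n with h0 | hn0
            · intro j hj
              rw [h0, hΓ0] at hj
              exact absurd hj (Finset.notMem_empty j)
            · exact (hstep n hn0 hnT).2.2.2.2.2
          -- the residual `r n` is nonzero
          have hrn : r n ≠ 0 := by
            intro hrz
            have hyspan : y ∈ Submodule.span ℝ
                {v : Fin N → ℝ | ∃ j ∈ Γcum n, v = fun i => Φ i j} := by
              rcases Nat.eq_zero_or_pos n with h0 | hn0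
              · subst h0
                have hy0 : y = 0 := hr0.symm.trans hrz
                rw [hy0]
                exact Submodule.zero_mem _
              · obtain ⟨_, _, _, _, hspan', _⟩ := hstep n hn0 hnT
                rwa [hrz, sub_zero] at hspan'
            obtain ⟨a, ha⟩ := span_col_repr Φ (Γcum n) hyspan
            have hsum2 : ∑ j ∈ Λopt, (if j ∈ Γcum n then a j else 0) • (fun i => Φ i j)
                = ∑ j ∈ Γcum n, a j • (fun i => Φ i j) := by
              rw [← Finset.sum_subset hsub (fun j _ hj => by simp [hj])]
              exact Finset.sum_congr rfl fun j hj => by simp [hj]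
            have h0 : ∑ j ∈ Λopt,
                (x j - (if j ∈ Γcum n then a j else 0)) • (fun i => Φ i j)
                = (0 : Fin N → ℝ) := by
              have hsplit : ∑ j ∈ Λopt,
                  (x j - (if j ∈ Γcum n then a j else 0)) • (fun i => Φ i j)
                  = (∑ j ∈ Λopt, x j • (fun i => Φ i j))
                    - ∑ j ∈ Λopt, (if j ∈ Γcum n then a j else 0) • (fun i => Φ i j) := by
                rw [← Finset.sum_sub_distrib]
                exact Finset.sum_congr rfl fun j _ => sub_smul _ _ _
              rw [hsplit, hsum2, ← hyx, ← ha, sub_self]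
            have hall := li_coeff_zero Φ Λopt hli _ h0
            obtain ⟨j0, hj0opt, hj0cum⟩ : ∃ j0 ∈ Λopt, j0 ∉ Γcum n := by
              by_contra hcon
              push_neg at hcon
              have hcc : Λopt.card ≤ (Γcum n).card := Finset.card_le_card hcon
              rw [hΛcard, hcard] at hcc
              exact absurd hcc (not_le_of_gt hcnk)
            have hz := hall j0 hj0opt
            simp only [hj0cum, if_false, sub_zero] at hz
            exact (hΛ j0).mp hj0opt hz
          -- the chosen block consists entirely of optimal atoms
          have hblkfull : (Γblk (n + 1) ∩ Λopt).card = c := by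
            by_contra hne
            have hle : (Γblk (n + 1) ∩ Λopt).card ≤ c := by
              calc (Γblk (n + 1) ∩ Λopt).card ≤ (Γblk (n + 1)).card :=
                    Finset.card_le_card Finset.inter_subset_left
                _ = c := hblk_card
            have hlt : (Γblk (n + 1) ∩ Λopt).card < c := lt_of_le_of_ne hle hne
            obtain ⟨Ω, hΩsub, hΩcard⟩ :=
              Finset.exists_subset_card_eq (show c ≤ Λopt.card by rw [hΛcard]; exact hck)
            have hΩint : Ω ∩ Λopt = Ω := Finset.inter_eq_left.mpr hΩsub
            obtain ⟨Ω2, hΩ2c, hΩ2int, hΩ2lt⟩ :=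
              hρ (n + 1) (by omega) hn1 hrn (Γblk (n + 1)) hblk_card
                ⟨Ω, hΩcard, by rw [hΩint, hΩcard]; exact hlt⟩
            simp only [Nat.add_sub_cancel] at hΩ2lt
            have hsum_eq : ∑ j ∈ Ω2 \ Γcum n, (∑ i, Φ i j * r n i) ^ 2
                = ∑ j ∈ Ω2, (∑ i, Φ i j * r n i) ^ 2 :=
              Finset.sum_subset Finset.sdiff_subset (fun j hj hj2 => by
                have hjc : j ∈ Γcum n := by
                  by_contra hjc
                  exact hj2 (Finset.mem_sdiff.mpr ⟨hj, hjc⟩)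
                rw [horthn j hjc]
                norm_num)
            have hcompl : c ≤ (Finset.univ \ Γcum n).card := by
              rw [Finset.card_sdiff_of_subset (Finset.subset_univ _), Finset.card_univ,
                Fintype.card_fin, hcard]
              have h := le_trans hcn1 hcd
              exact Nat.le_sub_of_add_le (by rw [Nat.add_comm]; exact h)
            have hS2sub : Ω2 \ Γcum n ⊆ Finset.univ \ Γcum n :=
              Finset.sdiff_subset_sdiff (Finset.subset_univ _) (Finset.Subset.refl _)
            have hS2card : (Ω2 \ Γcum n).card ≤ c :=
              le_trans (Finset.card_le_card Finset.sdiff_subset) (le_of_eq hΩ2c)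
            obtain ⟨Ω2', hs1, hs2, hs3⟩ :=
              Finset.exists_subsuperset_card_eq hS2sub hS2card hcompl
            have hmono : ∑ j ∈ Ω2 \ Γcum n, (∑ i, Φ i j * r n i) ^ 2
                ≤ ∑ j ∈ Ω2', (∑ i, Φ i j * r n i) ^ 2 :=
              Finset.sum_le_sum_of_subset_of_nonneg hs1 (fun j _ _ => sq_nonneg _)
            have hgr := hgreedy Ω2' hs2 hs3
            have hsq : Real.sqrt (∑ j ∈ Ω2, (∑ i, Φ i j * r n i) ^ 2)
                ≤ Real.sqrt (∑ j ∈ Ω2', (∑ i, Φ i j * r n i) ^ 2) :=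
              Real.sqrt_le_sqrt (by rw [← hsum_eq]; exact hmono)
            linarith
          have hblksub2 : Γblk (n + 1) ⊆ Λopt := by
            have heq : Γblk (n + 1) ∩ Λopt = Γblk (n + 1) :=
              Finset.eq_of_subset_of_card_le Finset.inter_subset_left
                (by rw [hblk_card, hblkfull])
            rw [← heq]
            exact Finset.inter_subset_right
          have hdisj : Disjoint (Γcum n) (Γblk (n + 1)) :=
            Finset.disjoint_left.mpr fun a ha hb =>
              (Finset.mem_sdiff.mp (hblk_sub hb)).2 ha
          refine Or.inr ⟨?_, ?_⟩
          · rw [hcum]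
            exact Finset.union_subset hsub hblksub2
          · rw [hcum, Finset.card_union_of_disjoint hdisj, hcard, hblk_card, Nat.mul_succ]
  -- conclusion
  have hfin : Λopt ⊆ Γcum T := by
    rcases key T le_rfl with h | ⟨hsub, hcard⟩
    · exact h
    · have heq : Γcum T = Λopt :=
        Finset.eq_of_subset_of_card_le hsub (by rw [hΛcard, hcard]; exact hkT)
      rw [heq]
  refine ⟨hfin, ?_⟩
  obtain ⟨_, _, _, _, hspanT, horthT⟩ := hstep T hT1 le_rfl
  have hymem : y ∈ Submodule.span ℝ
      {v : Fin N → ℝ | ∃ j ∈ Γcum T, v = fun i => Φ i j} := by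
    rw [hyx]
    exact Submodule.sum_mem _ fun j hj =>
      Submodule.smul_mem _ _ (Submodule.subset_span ⟨j, hfin hj, rfl⟩)
  have hrmem : r T ∈ Submodule.span ℝ
      {v : Fin N → ℝ | ∃ j ∈ Γcum T, v = fun i => Φ i j} := by
    have h := Submodule.sub_mem _ hymem hspanT
    simpa using h
  obtain ⟨a, ha⟩ := span_col_repr Φ (Γcum T) hrmem
  have hpt : ∀ i, r T i = ∑ j ∈ Γcum T, a j * Φ i j := by
    intro i
    have h := congrFun ha i
    rw [Finset.sum_apply] at h
    simpa using h
  have key2 : ∑ i, r T i ^ 2 = ∑ j ∈ Γcum T, a j * ∑ i, Φ i j * r T i := by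
    have h1 : ∀ i, r T i ^ 2 = ∑ j ∈ Γcum T, a j * (Φ i j * r T i) := by
      intro i
      calc r T i ^ 2 = (∑ j ∈ Γcum T, a j * Φ i j) * r T i := by rw [← hpt i, sq]
        _ = ∑ j ∈ Γcum T, a j * (Φ i j * r T i) := by
            rw [Finset.sum_mul]
            exact Finset.sum_congr rfl fun j _ => by ring
    rw [show (∑ i, r T i ^ 2) = ∑ i, ∑ j ∈ Γcum T, a j * (Φ i j * r T i) from
      Finset.sum_congr rfl fun i _ => h1 i]
    rw [Finset.sum_comm]
    exact Finset.sum_congr rfl fun j _ => by rw [Finset.mul_sum]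
  have hzero : ∑ i, r T i ^ 2 = 0 := by
    rw [key2]
    exact Finset.sum_eq_zero fun j hj => by rw [horthT j hj, mul_zero]
  have hall : ∀ i, r T i ^ 2 = 0 := fun i =>
    (Finset.sum_eq_zero_iff_of_nonneg (fun i _ => sq_nonneg _)).mp hzero i (Finset.mem_univ i)
  funext i
  exact pow_eq_zero_iff (two_ne_zero) |>.mp (hall i)
end

section
/- Let Γ ⊆ {1,…,d} and let r ∈ ℝ^N with r ≠ 0 satisfy ⟨φ_j, r⟩ = 0 for every j ∈ Γ. Assume Λ_opt ⊄ Γ, that {1,…,d} ∖ Γ has at least c elements, and that ‖Ψᵀ r‖_∞ < ‖Φ_optᵀ r‖_∞. Then every c-element subset Ω ⊆ {1,…,d} ∖ Γ that maximizes ‖Φ_Ωᵀ r‖_2 over all c-element subsets of {1,…,d} ∖ Γ contains at least one index of Λ_opt ∖ Γ; i.e., under the weak greedy-choice condition a BSR step selects at least one new optimal column. -/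
open Finset Matrix

/-- Under the weak greedy-choice condition `‖Ψᵀ r‖_∞ < ‖Φ_optᵀ r‖_∞`, a BSR step selects
at least one new optimal column: any `c`-element subset of `{1,…,d} ∖ Γ` maximizing
`‖Φ_Ωᵀ r‖₂` meets `Λ_opt ∖ Γ`. -/
theorem bsr_step_weak
    (N d k c : ℕ) (hk : 1 ≤ k) (hc1 : 1 ≤ c) (hck : c ≤ k)
    (Φ : Matrix (Fin N) (Fin d) ℝ)
    (hunit : ∀ j, ∑ i, Φ i j ^ 2 = 1)
    (x : Fin d → ℝ) (Λopt : Finset (Fin d))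
    (hΛ : ∀ j, j ∈ Λopt ↔ x j ≠ 0)
    (hΛcard : Λopt.card = k)
    (hne : Λopt.Nonempty)
    (y : Fin N → ℝ) (hy : y = Φ.mulVec x)
    (Γ : Finset (Fin d)) (r : Fin N → ℝ) (hr : r ≠ 0)
    (horth : ∀ j ∈ Γ, ∑ i, Φ i j * r i = 0)
    (hnotsub : ¬ Λopt ⊆ Γ)
    (hroom : c ≤ (Finset.univ \ Γ).card)
    -- the weak greedy-choice condition: `‖Ψᵀ r‖_∞ < ‖Φ_optᵀ r‖_∞`
    (hweak : ∀ j ∉ Λopt, |∑ i, Φ i j * r i| <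
      Λopt.sup' hne fun l => |∑ i, Φ i l * r i|) :
    ∀ Ω ⊆ Finset.univ \ Γ, Ω.card = c →
      (∀ Ω' ⊆ Finset.univ \ Γ, Ω'.card = c →
        Real.sqrt (∑ j ∈ Ω', (∑ i, Φ i j * r i) ^ 2) ≤
          Real.sqrt (∑ j ∈ Ω, (∑ i, Φ i j * r i) ^ 2)) →
      (Ω ∩ (Λopt \ Γ)).Nonempty := by
  
  intro Ω hΩsub hΩcard hmax
  by_contra hempty
  rw [Finset.not_nonempty_iff_eq_empty] at hempty
  set f : Fin d → ℝ := fun j => ∑ i, Φ i j * r i with hf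
  have hΩΓ : ∀ j ∈ Ω, j ∉ Γ := fun j hj =>
    (Finset.mem_sdiff.mp (hΩsub hj)).2
  have hΩΛ : ∀ j ∈ Ω, j ∉ Λopt := by
    intro j hj hjΛ
    have : j ∈ Ω ∩ (Λopt \ Γ) :=
      Finset.mem_inter.mpr ⟨hj, Finset.mem_sdiff.mpr ⟨hjΛ, hΩΓ j hj⟩⟩
    simp [hempty] at this
  obtain ⟨j0, hj0⟩ : Ω.Nonempty := Finset.card_pos.mp (by omega)
  obtain ⟨l, hlΛ, hlM⟩ := Finset.exists_mem_eq_sup' hne (fun l => |f l|)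
  have hj0lt : |f j0| < |f l| := by
    rw [← hlM]; exact hweak j0 (hΩΛ j0 hj0)
  have hlpos : 0 < |f l| := lt_of_le_of_lt (abs_nonneg _) hj0lt
  have hlΓ : l ∉ Γ := by
    intro hlΓ
    have : f l = 0 := horth l hlΓ
    simp [this] at hlpos
  have hlΩ : l ∉ Ω := fun h => hΩΛ l h hlΛ
  set Ω' : Finset (Fin d) := insert l (Ω.erase j0) with hΩ'
  have hlne : l ∉ Ω.erase j0 := fun h => hlΩ (Finset.mem_of_mem_erase h)
  have hΩ'sub : Ω' ⊆ Finset.univ \ Γ := by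
    intro j hj
    rcases Finset.mem_insert.mp hj with rfl | hj
    · exact Finset.mem_sdiff.mpr ⟨Finset.mem_univ _, hlΓ⟩
    · exact hΩsub (Finset.mem_of_mem_erase hj)
  have hΩ'card : Ω'.card = c := by
    rw [hΩ', Finset.card_insert_of_notMem hlne, Finset.card_erase_of_mem hj0, hΩcard]
    omega
  have hsum' : ∑ j ∈ Ω', f j ^ 2 = f l ^ 2 + ∑ j ∈ Ω.erase j0, f j ^ 2 :=
    Finset.sum_insert hlne
  have hsum : ∑ j ∈ Ω, f j ^ 2 = f j0 ^ 2 + ∑ j ∈ Ω.erase j0, f j ^ 2 :=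
    (Finset.add_sum_erase _ _ hj0).symm
  have hsq : f j0 ^ 2 < f l ^ 2 := by
    rw [← sq_abs (f j0), ← sq_abs (f l)]
    exact pow_lt_pow_left₀ hj0lt (abs_nonneg _) two_ne_zero
  have hlt : ∑ j ∈ Ω, f j ^ 2 < ∑ j ∈ Ω', f j ^ 2 := by
    rw [hsum, hsum']; linarith
  have hnn : 0 ≤ ∑ j ∈ Ω, f j ^ 2 :=
    Finset.sum_nonneg fun _ _ => sq_nonneg _
  have := hmax Ω' hΩ'sub hΩ'card
  have h2 := Real.sqrt_lt_sqrt hnn hlt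
  exact absurd this (not_le.mpr h2)
end

section
/- Under the X-setup, let r ∈ ℝ^N with r ≠ 0 lie in the column span of X and satisfy ⟨φ_j, r⟩ = 0 for every j ∈ Γ. If max_ψ ‖(X⁺)_{Π,:} ψ‖_1 < 1, where ψ ranges over the columns of Ψ_J̄, then ‖Ψᵀ r‖_∞ < ‖Φ_optᵀ r‖_∞, i.e., the greedy choice ratio ρ(r) = ‖Ψᵀ r‖_∞ / ‖Φ_optᵀ r‖_∞ satisfies ρ(r) < 1. -/
open Finset Matrix

/-- **Lemma 1.** Under the X-setup, if `max_ψ ‖(X⁺)_{Π,:} ψ‖₁ < 1` (ψ ranging over the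
columns of `Ψ_J̄`), then for any nonzero residual `r` lying in the column span of `X`
and orthogonal to the already selected columns, `‖Ψᵀ r‖_∞ < ‖Φ_optᵀ r‖_∞`,
i.e. the greedy choice ratio satisfies `ρ(r) < 1`. -/
theorem lm_rho
    (N d k : ℕ) (hk : 1 ≤ k)
    (Φ : Matrix (Fin N) (Fin d) ℝ)
    (hunit : ∀ j, ∑ i, Φ i j ^ 2 = 1)
    (x : Fin d → ℝ) (Λopt : Finset (Fin d))
    (hΛ : ∀ j, j ∈ Λopt ↔ x j ≠ 0)
    (hΛcard : Λopt.card = k)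
    (hne : Λopt.Nonempty)
    (y : Fin N → ℝ) (hy : y = Φ.mulVec x)
    (Γ : Finset (Fin d))
    -- `X` is the submatrix of `Φ` with columns indexed by `Λopt ∪ Γ`
    (X : Matrix (Fin N) {j // j ∈ Λopt ∪ Γ} ℝ)
    (hX : ∀ i j, X i j = Φ i j.val)
    -- `X` has full column rank
    (hrank : LinearIndependent ℝ (fun j : {j // j ∈ Λopt ∪ Γ} => fun i => X i j))
    -- `Xp = X⁺ = (XᵀX)⁻¹Xᵀ`
    (Xp : Matrix {j // j ∈ Λopt ∪ Γ} (Fin N) ℝ)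
    (hXp : Xp = (Xᵀ * X)⁻¹ * Xᵀ)
    (r : Fin N → ℝ) (hr : r ≠ 0)
    -- `r` lies in the column span of `X`
    (hspan : r ∈ Submodule.span ℝ
      {v : Fin N → ℝ | ∃ j ∈ Λopt ∪ Γ, v = fun i => Φ i j})
    (horth : ∀ j ∈ Γ, ∑ i, Φ i j * r i = 0)
    -- `max_ψ ‖(X⁺)_{Π,:} ψ‖₁ < 1`, ψ ranging over columns of `Ψ_J̄` (indices outside
    -- `Λopt ∪ Γ`), `Π` being the column positions of `X` lying in `Λopt \ Γ`
    (hmax : ∀ j, j ∉ Λopt ∪ Γ →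
      ∑ p ∈ Finset.univ.filter
          (fun p : {j // j ∈ Λopt ∪ Γ} => p.val ∈ Λopt \ Γ),
        |∑ i, Xp p i * Φ i j| < 1) :
    ∀ j ∉ Λopt, |∑ i, Φ i j * r i| <
      Λopt.sup' hne fun l => |∑ i, Φ i l * r i| := by
  classical
  set M := Λopt.sup' hne fun l => |∑ i, Φ i l * r i| with hM
  -- r = X *ᵥ c
  have hsetr : {v : Fin N → ℝ | ∃ j ∈ Λopt ∪ Γ, v = fun i => Φ i j}
      = Set.range (fun p : {j // j ∈ Λopt ∪ Γ} => fun i => X i p) := by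
    ext v
    constructor
    · rintro ⟨j, hj, rfl⟩
      exact ⟨⟨j, hj⟩, funext fun i => hX i ⟨j, hj⟩⟩
    · rintro ⟨p, rfl⟩
      exact ⟨p.1, p.2, funext fun i => hX i p⟩
  rw [hsetr] at hspan
  obtain ⟨c, hc⟩ := (Submodule.mem_span_range_iff_exists_fun ℝ).1 hspan
  have hrc : r = X *ᵥ c := by
    funext i
    rw [← hc]
    simp [Matrix.mulVec, dotProduct, mul_comm]
  set A := Xᵀ * X with hA
  have hdet : IsUnit A.det := by
    rw [isUnit_iff_ne_zero]
    intro h0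
    obtain ⟨v, hv0, hv⟩ := Matrix.exists_mulVec_eq_zero_iff.2 h0
    have hXv : X *ᵥ v = 0 := by
      have h1 : v ⬝ᵥ (A *ᵥ v) = 0 := by rw [hv, dotProduct_zero]
      rw [hA, ← Matrix.mulVec_mulVec, Matrix.dotProduct_mulVec,
        Matrix.vecMul_transpose] at h1
      exact dotProduct_self_eq_zero.1 h1
    have hsum : ∑ p, v p • (fun i => X i p) = (0 : Fin N → ℝ) := by
      funext i
      rw [Finset.sum_apply]
      simpa [Matrix.mulVec, dotProduct, mul_comm] using congrFun hXv i
    have := Fintype.linearIndependent_iff.1 hrank v hsum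
    exact hv0 (funext this)
  have hAsymm : Aᵀ = A := by rw [hA, Matrix.transpose_mul, Matrix.transpose_transpose]
  have h1 : Xᵀ *ᵥ r = A *ᵥ c := by rw [hrc, hA, Matrix.mulVec_mulVec]
  have key : ∀ w : Fin N → ℝ, w ⬝ᵥ r = (Xp *ᵥ w) ⬝ᵥ (Xᵀ *ᵥ r) := by
    intro w
    calc w ⬝ᵥ r = w ⬝ᵥ (X *ᵥ c) := by rw [← hrc]
      _ = (w ᵥ* X) ⬝ᵥ c := Matrix.dotProduct_mulVec _ _ _
      _ = (Xᵀ *ᵥ w) ⬝ᵥ c := by rw [Matrix.mulVec_transpose]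
      _ = ((A * Xp) *ᵥ w) ⬝ᵥ c := by
            rw [hXp, ← Matrix.mul_assoc, Matrix.mul_nonsing_inv _ hdet,
              Matrix.one_mul]
      _ = (A *ᵥ (Xp *ᵥ w)) ⬝ᵥ c := by rw [← Matrix.mulVec_mulVec]
      _ = (Aᵀ *ᵥ (Xp *ᵥ w)) ⬝ᵥ c := by rw [hAsymm]
      _ = ((Xp *ᵥ w) ᵥ* A) ⬝ᵥ c := by rw [Matrix.mulVec_transpose]
      _ = (Xp *ᵥ w) ⬝ᵥ (A *ᵥ c) := (Matrix.dotProduct_mulVec _ _ _).symm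
      _ = (Xp *ᵥ w) ⬝ᵥ (Xᵀ *ᵥ r) := by rw [h1]
  have hvapp : ∀ p : {j // j ∈ Λopt ∪ Γ}, (Xᵀ *ᵥ r) p = ∑ i, Φ i p.val * r i := by
    intro p
    simp [Matrix.mulVec, dotProduct, hX]
  have hvΓ : ∀ p : {j // j ∈ Λopt ∪ Γ}, p.val ∈ Γ → (Xᵀ *ᵥ r) p = 0 := by
    intro p hp
    rw [hvapp p]
    exact horth p.val hp
  have hMpos : 0 < M := by
    rcases lt_or_ge 0 M with h | h
    · exact h
    exfalso
    have hzero : ∀ l ∈ Λopt, ∑ i, Φ i l * r i = 0 := by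
      intro l hl
      have h2 : |∑ i, Φ i l * r i| ≤ M :=
        Finset.le_sup' (fun l => |∑ i, Φ i l * r i|) hl
      exact abs_eq_zero.1 (le_antisymm (h2.trans h) (abs_nonneg _))
    have hv0 : Xᵀ *ᵥ r = 0 := by
      funext p
      rcases Finset.mem_union.1 p.2 with hp | hp
      · rw [hvapp p]; exact hzero p.val hp
      · exact hvΓ p hp
    have hrr : r ⬝ᵥ r = 0 := by
      have h3 : c ⬝ᵥ (Xᵀ *ᵥ r) = 0 := by rw [hv0, dotProduct_zero]
      rwa [Matrix.dotProduct_mulVec, Matrix.vecMul_transpose, ← hrc] at h3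
    exact hr (dotProduct_self_eq_zero.1 hrr)
  intro j hj
  by_cases hjΓ : j ∈ Γ
  · rw [horth j hjΓ]
    simpa using hMpos
  · have hjout : j ∉ Λopt ∪ Γ := by
      simp [Finset.mem_union, hj, hjΓ]
    set φj : Fin N → ℝ := fun i => Φ i j with hφj
    have hjr : ∑ i, Φ i j * r i = (Xp *ᵥ φj) ⬝ᵥ (Xᵀ *ᵥ r) := key φj
    set S := Finset.univ.filter
      (fun p : {j // j ∈ Λopt ∪ Γ} => p.val ∈ Λopt \ Γ) with hS
    have hsum : (Xp *ᵥ φj) ⬝ᵥ (Xᵀ *ᵥ r) = ∑ p ∈ S, (Xp *ᵥ φj) p * (Xᵀ *ᵥ r) p := by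
      rw [dotProduct]
      symm
      apply Finset.sum_subset (Finset.subset_univ S)
      intro p _ hpS
      have hpΓ : p.val ∈ Γ := by
        rcases Finset.mem_union.1 p.2 with h | h
        · by_contra hΓ
          exact hpS (Finset.mem_filter.2
            ⟨Finset.mem_univ _, Finset.mem_sdiff.2 ⟨h, hΓ⟩⟩)
        · exact h
      rw [hvΓ p hpΓ, mul_zero]
    have hub : ∀ p ∈ S, |(Xᵀ *ᵥ r) p| ≤ M := by
      intro p hpS
      have hpΛ : p.val ∈ Λopt := (Finset.mem_sdiff.1 (Finset.mem_filter.1 hpS).2).1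
      rw [hvapp p]
      exact Finset.le_sup' (fun l => |∑ i, Φ i l * r i|) hpΛ
    have hmaxj : ∑ p ∈ S, |(Xp *ᵥ φj) p| < 1 := hmax j hjout
    calc |∑ i, Φ i j * r i| = |∑ p ∈ S, (Xp *ᵥ φj) p * (Xᵀ *ᵥ r) p| := by
          rw [hjr, hsum]
      _ ≤ ∑ p ∈ S, |(Xp *ᵥ φj) p * (Xᵀ *ᵥ r) p| :=
          Finset.abs_sum_le_sum_abs _ _
      _ = ∑ p ∈ S, |(Xp *ᵥ φj) p| * |(Xᵀ *ᵥ r) p| := by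
          simp [abs_mul]
      _ ≤ ∑ p ∈ S, |(Xp *ᵥ φj) p| * M := by
          refine Finset.sum_le_sum fun p hp => ?_
          exact mul_le_mul_of_nonneg_left (hub p hp) (abs_nonneg _)
      _ = (∑ p ∈ S, |(Xp *ᵥ φj) p|) * M := (Finset.sum_mul _ _ _).symm
      _ < 1 * M := mul_lt_mul_of_pos_right hmaxj hMpos
      _ = M := one_mul M
end

section
/- Let X be a real N×n matrix with full column rank, let Π ⊆ {1,…,n}, and let r ∈ ℝ^N lie in the column span of X with (Xᵀ r)_i = 0 for every i ∉ Π. Then for every ψ ∈ ℝ^N, |⟨ψ, r⟩| ≤ ‖(X⁺)_{Π,:} ψ‖_1 · ‖(Xᵀ r)_Π‖_∞, where (Xᵀr)_Π denotes the entries of Xᵀr indexed by Π. -/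
open Finset Matrix

/-- For a full-column-rank `X` and a vector `r` in the column span of `X` whose
correlations `(Xᵀ r)_i` vanish outside `Π`, every `ψ` satisfies
`|⟨ψ, r⟩| ≤ ‖(X⁺)_{Π,:} ψ‖₁ · ‖(Xᵀ r)_Π‖_∞`. -/
theorem projection_inner_bound
    (N n : ℕ)
    (X : Matrix (Fin N) (Fin n) ℝ)
    (hrank : LinearIndependent ℝ (fun j : Fin n => fun i => X i j))
    (Pset : Finset (Fin n))
    (r : Fin N → ℝ)
    (hspan : r ∈ Submodule.span ℝ (Set.range fun j : Fin n => fun i => X i j))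
    (hzero : ∀ i ∉ Pset, ∑ l, X l i * r l = 0) :
    ∀ ψ : Fin N → ℝ,
      |∑ i, ψ i * r i| ≤
        (∑ p ∈ Pset, |∑ i, ((Xᵀ * X)⁻¹ * Xᵀ) p i * ψ i|) *
          (⨆ p ∈ Pset, |∑ l, X l p * r l|) := by
  intro ψ
  classical
  set A : Matrix (Fin n) (Fin n) ℝ := Xᵀ * X with hAdef
  set B : Matrix (Fin n) (Fin N) ℝ := A⁻¹ * Xᵀ with hBdef
  obtain ⟨c, hc⟩ := (Submodule.mem_span_range_iff_exists_fun ℝ).mp hspan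
  have hr : r = X *ᵥ c := by
    ext i
    rw [← hc]
    simp [Matrix.mulVec, dotProduct, mul_comm]
  have hXinj : Function.Injective X.mulVec := by
    rw [Matrix.mulVec_injective_iff]
    exact hrank
  have hAinj : Function.Injective A.mulVec := by
    intro u v huv
    apply hXinj
    have h0 : A *ᵥ (u - v) = 0 := by
      rw [Matrix.mulVec_sub, huv, sub_self]
    have h1 : (X *ᵥ (u - v)) ⬝ᵥ (X *ᵥ (u - v)) = 0 := by
      have h2 : (u - v) ⬝ᵥ (A *ᵥ (u - v)) = 0 := by rw [h0]; simp
      rwa [hAdef, ← Matrix.mulVec_mulVec, Matrix.dotProduct_mulVec,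
        Matrix.vecMul_transpose] at h2
    have h3 : X *ᵥ (u - v) = 0 := dotProduct_self_eq_zero.mp h1
    rw [Matrix.mulVec_sub, sub_eq_zero] at h3
    exact h3
  have hAunit : IsUnit A := Matrix.mulVec_injective_iff_isUnit.mp hAinj
  have hAA : A * A⁻¹ = 1 :=
    Matrix.mul_nonsing_inv A ((Matrix.isUnit_iff_isUnit_det A).mp hAunit)
  have hAsymm : Aᵀ = A := by rw [hAdef, Matrix.transpose_mul, Matrix.transpose_transpose]
  have key : ∑ i, ψ i * r i = ∑ p, (B *ᵥ ψ) p * ((Xᵀ *ᵥ r) p) := by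
    have lhs : ∑ i, ψ i * r i = (ψ ᵥ* X) ⬝ᵥ c := by
      rw [show (∑ i, ψ i * r i) = ψ ⬝ᵥ r from rfl, hr, Matrix.dotProduct_mulVec]
    have h1 : Xᵀ *ᵥ r = A *ᵥ c := by rw [hr, Matrix.mulVec_mulVec, hAdef]
    have rhs : ∑ p, (B *ᵥ ψ) p * ((Xᵀ *ᵥ r) p) = (ψ ᵥ* X) ⬝ᵥ c := by
      rw [show (∑ p, (B *ᵥ ψ) p * ((Xᵀ *ᵥ r) p)) = (B *ᵥ ψ) ⬝ᵥ (Xᵀ *ᵥ r) from rfl,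
        h1, Matrix.dotProduct_mulVec, ← hAsymm, Matrix.vecMul_transpose,
        Matrix.mulVec_mulVec, hBdef, ← Matrix.mul_assoc, hAA, Matrix.one_mul,
        Matrix.mulVec_transpose]
    rw [lhs, rhs]
  have hXr : ∀ p, (Xᵀ *ᵥ r) p = ∑ l, X l p * r l := by
    intro p
    simp [Matrix.mulVec, dotProduct, Matrix.transpose_apply]
  have key2 : ∑ i, ψ i * r i = ∑ p ∈ Pset, (B *ᵥ ψ) p * (∑ l, X l p * r l) := by
    rw [key]
    simp_rw [hXr]
    exact (Finset.sum_subset (Finset.subset_univ Pset)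
      (fun p _ hp => by rw [hzero p hp, mul_zero])).symm
  set M : ℝ := ⨆ p ∈ Pset, |∑ l, X l p * r l| with hMdef
  have hM : ∀ p ∈ Pset, |∑ l, X l p * r l| ≤ M := by
    intro p hp
    have hbdd : BddAbove (Set.range fun q => ⨆ _ : q ∈ Pset, |∑ l, X l q * r l|) :=
      (Set.finite_range _).bddAbove
    refine le_trans ?_ (le_ciSup hbdd p)
    rw [ciSup_pos hp]
  have hBψ : ∀ p, (B *ᵥ ψ) p = ∑ i, ((Xᵀ * X)⁻¹ * Xᵀ) p i * ψ i := by
    intro p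
    simp [hBdef, hAdef, Matrix.mulVec, dotProduct]
  calc |∑ i, ψ i * r i| = |∑ p ∈ Pset, (B *ᵥ ψ) p * (∑ l, X l p * r l)| := by rw [key2]
    _ ≤ ∑ p ∈ Pset, |(B *ᵥ ψ) p * (∑ l, X l p * r l)| := Finset.abs_sum_le_sum_abs _ _
    _ ≤ ∑ p ∈ Pset, |(B *ᵥ ψ) p| * M := by
        refine Finset.sum_le_sum fun p hp => ?_
        rw [abs_mul]
        exact mul_le_mul_of_nonneg_left (hM p hp) (abs_nonneg _)
    _ = (∑ p ∈ Pset, |∑ i, ((Xᵀ * X)⁻¹ * Xᵀ) p i * ψ i|) * M := by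
        rw [← Finset.sum_mul]
        exact congrArg (· * M) (Finset.sum_congr rfl fun p _ => by rw [hBψ])
end

section
/- Let X be an N×n matrix (n ≥ 2) whose columns are n distinct columns of Φ, and suppose μ_1(n−1) < 1. Then XᵀX is invertible and, for every nonempty Π ⊆ {1,…,n}, ‖((XᵀX)⁻¹)_{Π,:}‖_1 ≤ ‖(XᵀX)⁻¹‖_1 ≤ 1/(1 − μ_1(n−1)). -/
/-!
The Gram matrix `G = XᵀX` has unit diagonal, and by the definition of cumulative coherence each
off-diagonal row sum `∑_{q ≠ p} |⟨φ_{g p}, φ_{g q}⟩|` is at most `μ₁(n-1) < 1`. Hence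
`‖G - 1‖ < 1` in the `ℓ∞` operator norm (maximum absolute row sum), and the Neumann series
inverts `G` with `‖G⁻¹‖ ≤ 1 / (1 - ‖G - 1‖) ≤ 1 / (1 - μ₁(n-1))`. As `G⁻¹` is symmetric, its
column sums are its row sums; restricting to the rows in `Π` only drops nonnegative terms.
-/

open Finset Matrix

/-- The cumulative coherence `μ₁(m)` of the dictionary `Φ`. -/
noncomputable def mu1 (N d : ℕ) (Φ : Matrix (Fin N) (Fin d) ℝ) (m : ℕ) : ℝ :=
  ⨆ Λ ∈ {Λ : Finset (Fin d) | Λ.card = m},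
    ⨆ j ∈ Finset.univ \ Λ, ∑ l ∈ Λ, |∑ i, Φ i l * Φ i j|

attribute [local instance] Matrix.linftyOpNormedAddCommGroup Matrix.linftyOpNormedRing

namespace Matrix

variable {m n 𝕜 α : Type*} [Fintype m]

theorem transpose_mul_self_isSymm [CommSemiring α] (A : Matrix m n α) : (Aᵀ * A).IsSymm := by
  rw [IsSymm, transpose_mul, transpose_transpose]

variable [Fintype n]

theorem sum_norm_le_linfty_opNorm [NormedAddCommGroup α] (A : Matrix m n α) (i : m) :
    ∑ j, ‖A i j‖ ≤ ‖A‖ := by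
  have := Finset.le_sup (f := fun i => ∑ j, ‖A i j‖₊) (Finset.mem_univ i)
  rw [linfty_opNorm_def]
  simpa only [← coe_nnnorm, ← NNReal.coe_sum, NNReal.coe_le_coe] using this

theorem linfty_opNorm_le_of_sum_norm_le [NormedAddCommGroup α] {A : Matrix m n α} {c : ℝ}
    (hc : 0 ≤ c) (h : ∀ i, ∑ j, ‖A i j‖ ≤ c) : ‖A‖ ≤ c := by
  rw [linfty_opNorm_def, ← NNReal.coe_mk c hc, NNReal.coe_le_coe]
  refine Finset.sup_le fun i _ => ?_
  rw [← NNReal.coe_le_coe, NNReal.coe_sum, NNReal.coe_mk]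
  simpa only [coe_nnnorm] using h i

theorem IsSymm.sum_norm_col_le_linfty_opNorm [NormedAddCommGroup α] {A : Matrix n n α}
    (hA : A.IsSymm) (j : n) : ∑ i, ‖A i j‖ ≤ ‖A‖ := by
  simpa only [hA.apply] using A.sum_norm_le_linfty_opNorm j

variable [DecidableEq n] [NormedCommRing 𝕜] [CompleteSpace 𝕜]

-- `Matrix.instCompleteSpace` is stated for the product uniformity, which agrees with the one
-- induced by the `L∞` operator norm only up to unfolding, so instance search cannot use it.
instance linftyOpHasSummableGeomSeries : HasSummableGeomSeries (Matrix n n 𝕜) :=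
  have : @CompleteSpace (Matrix n n 𝕜) PseudoMetricSpace.toUniformSpace :=
    (inferInstance : CompleteSpace (n → n → 𝕜))
  inferInstance

theorem isUnit_of_linfty_opNorm_sub_one_lt_one {A : Matrix n n 𝕜} (hA : ‖A - 1‖ < 1) :
    IsUnit A := by
  simpa using isUnit_one_sub_of_norm_lt_one (x := 1 - A) (by rwa [norm_sub_rev])

theorem linfty_opNorm_inv_le [NormOneClass 𝕜] {A : Matrix n n 𝕜} (hA : ‖A - 1‖ < 1) :
    ‖A⁻¹‖ ≤ (1 - ‖A - 1‖)⁻¹ := by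
  have hx : ‖1 - A‖ < 1 := by rwa [norm_sub_rev]
  have hone : ‖(1 : Matrix n n 𝕜)‖ ≤ 1 := by
    rw [← diagonal_one, linfty_opNorm_diagonal]
    exact (pi_norm_le_iff_of_nonneg zero_le_one).2 fun _ => norm_one.le
  calc ‖A⁻¹‖ = ‖∑' i, (1 - A) ^ i‖ := by
        rw [nonsing_inv_eq_ringInverse, geom_series_eq_inverse _ hx, sub_sub_cancel]
    _ ≤ ‖(1 : Matrix n n 𝕜)‖ - 1 + (1 - ‖1 - A‖)⁻¹ := tsum_geometric_le_of_norm_lt_one _ hx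
    _ ≤ (1 - ‖A - 1‖)⁻¹ := by rw [norm_sub_rev]; linarith

end Matrix

section Coherence

variable {N d : ℕ} (Φ : Matrix (Fin N) (Fin d) ℝ)

theorem mu1_nonneg (m : ℕ) : 0 ≤ mu1 N d Φ m :=
  Real.iSup_nonneg fun _ => Real.iSup_nonneg fun _ => Real.iSup_nonneg fun _ =>
    Real.iSup_nonneg fun _ => sum_nonneg fun _ _ => abs_nonneg _

theorem le_mu1 {m : ℕ} {Λ : Finset (Fin d)} (hΛ : #Λ = m) {j : Fin d} (hj : j ∉ Λ) :
    ∑ l ∈ Λ, |∑ i, Φ i l * Φ i j| ≤ mu1 N d Φ m :=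
  le_ciSup_of_le (Set.finite_range _).bddAbove Λ <|
    le_ciSup_of_le (Set.finite_range _).bddAbove hΛ <|
      le_ciSup_of_le (Set.finite_range _).bddAbove j <|
        le_ciSup_of_le (Set.finite_range _).bddAbove (by simpa using hj) le_rfl

variable {Φ} {n : ℕ} {g : Fin n → Fin d} {X : Matrix (Fin N) (Fin n) ℝ}

theorem gram_apply_of_columns (hX : ∀ i j, X i j = Φ i (g j)) (p q : Fin n) :
    (Xᵀ * X) p q = ∑ i, Φ i (g p) * Φ i (g q) := by
  simp only [mul_apply, transpose_apply, hX]

theorem sum_erase_abs_gram_le_mu1 (hg : Function.Injective g) (hX : ∀ i j, X i j = Φ i (g j))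
    (p : Fin n) : ∑ q ∈ univ.erase p, |(Xᵀ * X) p q| ≤ mu1 N d Φ (n - 1) := by
  have hcard : #((univ.erase p).image g) = n - 1 := by
    rw [card_image_of_injective _ hg, card_erase_of_mem (mem_univ p), card_univ, Fintype.card_fin]
  have hp : g p ∉ (univ.erase p).image g := by simp [hg.eq_iff]
  calc ∑ q ∈ univ.erase p, |(Xᵀ * X) p q|
      = ∑ l ∈ (univ.erase p).image g, |∑ i, Φ i l * Φ i (g p)| := by
        rw [sum_image hg.injOn]
        simp only [gram_apply_of_columns hX, mul_comm (Φ _ (g p))]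
    _ ≤ mu1 N d Φ (n - 1) := le_mu1 Φ hcard hp

theorem linfty_opNorm_gram_sub_one_le_mu1 (hunit : ∀ j, ∑ i, Φ i j ^ 2 = 1)
    (hg : Function.Injective g) (hX : ∀ i j, X i j = Φ i (g j)) :
    ‖Xᵀ * X - 1‖ ≤ mu1 N d Φ (n - 1) := by
  refine linfty_opNorm_le_of_sum_norm_le (mu1_nonneg Φ _) fun p => ?_
  rw [← add_sum_erase _ _ (mem_univ p), Matrix.sub_apply, one_apply_eq,
    gram_apply_of_columns hX p p]
  simp only [← sq, hunit, sub_self, norm_zero, zero_add]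
  refine (sum_congr rfl fun q hq => ?_).trans_le (sum_erase_abs_gram_le_mu1 hg hX p)
  rw [Matrix.sub_apply, one_apply_ne (ne_of_mem_erase hq).symm, sub_zero, Real.norm_eq_abs]

end Coherence

theorem gram_inverse_norm_bound_general
    (N d n : ℕ)
    (Φ : Matrix (Fin N) (Fin d) ℝ)
    (hunit : ∀ j, ∑ i, Φ i j ^ 2 = 1)
    (g : Fin n → Fin d) (hg : Function.Injective g)
    (X : Matrix (Fin N) (Fin n) ℝ) (hX : ∀ i j, X i j = Φ i (g j))
    (hmu : mu1 N d Φ (n - 1) < 1) :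
    IsUnit (Xᵀ * X) ∧
      ∀ Pset : Finset (Fin n), Pset.Nonempty →
        (⨆ j : Fin n, ∑ p ∈ Pset, |(Xᵀ * X)⁻¹ p j|) ≤
            (⨆ j : Fin n, ∑ p, |(Xᵀ * X)⁻¹ p j|) ∧
          (⨆ j : Fin n, ∑ p, |(Xᵀ * X)⁻¹ p j|) ≤ 1 / (1 - mu1 N d Φ (n - 1)) := by
  have hoffDiag := linfty_opNorm_gram_sub_one_le_mu1 hunit hg hX
  have hlt : ‖Xᵀ * X - 1‖ < 1 := hoffDiag.trans_lt hmu
  refine ⟨isUnit_of_linfty_opNorm_sub_one_lt_one hlt, fun Pset _ => ⟨?_, ?_⟩⟩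
  · exact ciSup_mono (Set.finite_range _).bddAbove fun j =>
      sum_le_sum_of_subset_of_nonneg (subset_univ Pset) fun _ _ _ => abs_nonneg _
  · have hpos : 0 < 1 - mu1 N d Φ (n - 1) := by linarith
    refine Real.iSup_le (fun j => ?_) (by positivity)
    calc ∑ p, |(Xᵀ * X)⁻¹ p j| ≤ ‖(Xᵀ * X)⁻¹‖ := by
          simpa only [Real.norm_eq_abs] using
            (transpose_mul_self_isSymm X).inv.sum_norm_col_le_linfty_opNorm j
      _ ≤ (1 - ‖Xᵀ * X - 1‖)⁻¹ := linfty_opNorm_inv_le hlt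
      _ ≤ 1 / (1 - mu1 N d Φ (n - 1)) := by
          rw [one_div]
          gcongr

/-- If `X` consists of `n ≥ 2` distinct columns of `Φ` and `μ₁(n−1) < 1`, then `XᵀX` is
invertible and, for every nonempty `Π ⊆ {1,…,n}`,
`‖((XᵀX)⁻¹)_{Π,:}‖₁ ≤ ‖(XᵀX)⁻¹‖₁ ≤ 1/(1 − μ₁(n−1))` (with `‖·‖₁` the maximum
absolute column sum). -/
theorem gram_inverse_norm_bound
    (N d n : ℕ) (hn : 2 ≤ n)
    (Φ : Matrix (Fin N) (Fin d) ℝ)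
    (hunit : ∀ j, ∑ i, Φ i j ^ 2 = 1)
    (g : Fin n → Fin d) (hg : Function.Injective g)
    (X : Matrix (Fin N) (Fin n) ℝ) (hX : ∀ i j, X i j = Φ i (g j))
    (hmu : mu1 N d Φ (n - 1) < 1) :
    IsUnit (Xᵀ * X) ∧
      ∀ Pset : Finset (Fin n), Pset.Nonempty →
        (⨆ j : Fin n, ∑ p ∈ Pset, |(Xᵀ * X)⁻¹ p j|) ≤
            (⨆ j : Fin n, ∑ p, |(Xᵀ * X)⁻¹ p j|) ∧
          (⨆ j : Fin n, ∑ p, |(Xᵀ * X)⁻¹ p j|) ≤ 1 / (1 - mu1 N d Φ (n - 1)) :=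
  gram_inverse_norm_bound_general N d n Φ hunit g hg X hX hmu
end

section
/- Let y ∈ ℝ^N and let A_1,…,A_T be matrices, each with c columns in ℝ^N, such that the concatenated matrix A = [A_1 | ⋯ | A_T] has full column rank. Define blocks Z_1 = A_1 and, for t = 2,…,T, Z_t = A_t − Σ_{l=1}^{t−1} Z_l Γ_{l,t} with coefficient matrices Γ_{l,t} = Z_l⁺ A_t (so each column of Z_t is the component of the corresponding column of A_t orthogonal to span of the columns of Z_1,…,Z_{t−1}). Let β_t = Z_t⁺ y ∈ ℝ^c, and define block coefficients by the backward recurrence b_T = β_T and b_l = β_l − Σ_{s=l+1}^{T} Γ_{l,s} b_s for l = T−1,…,1. Then the blocks Z_1,…,Z_T are mutually orthogonal with span{columns of Z_1,…,Z_t} = span{columns of A_1,…,A_t} for each t, Σ_{t=1}^{T} A_t b_t = Σ_{t=1}^{T} Z_t β_t, and this vector equals the orthogonal projection of y onto the column span of A; consequently (b_1,…,b_T) is the unique least-squares solution minimizing ‖y − A w‖_2. (This is the correctness of the blocked successive-regression update in BSR: it produces the same least-squares solution and residual as gOMP.) -/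
open Finset Matrix

/-- **Correctness of the blocked successive-regression update in BSR.**
Given blocks `A₁,…,A_T` (each with `c` columns) whose concatenation has full column
rank, the blocked Gram–Schmidt blocks `Z_t`, coefficient matrices `Γ_{l,t} = Z_l⁺ A_t`,
block coefficients `β_t = Z_t⁺ y`, and the backward recurrence `b`, one has: the `Z_t`
are mutually orthogonal with matching partial column spans; `∑ A_t b_t = ∑ Z_t β_t`;
this vector is the orthogonal projection of `y` onto the column span of `A`; and `b` is
the unique least-squares solution minimizing `‖y − A w‖₂`. -/
theorem bsr_successive_regression_correct
    (N c T : ℕ) (hc : 1 ≤ c) (hT : 1 ≤ T)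
    (y : Fin N → ℝ)
    (A : Fin T → Matrix (Fin N) (Fin c) ℝ)
    -- the concatenated matrix `[A₁ | ⋯ | A_T]` has full column rank
    (hli : LinearIndependent ℝ (fun p : Fin T × Fin c => fun i => A p.1 i p.2))
    (Z : Fin T → Matrix (Fin N) (Fin c) ℝ)
    (Γm : Fin T → Fin T → Matrix (Fin c) (Fin c) ℝ)
    (β b : Fin T → Fin c → ℝ)
    -- `Γ_{l,t} = Z_l⁺ A_t` for `l < t`
    (hΓ : ∀ l t : Fin T, l < t → Γm l t = ((Z l)ᵀ * Z l)⁻¹ * (Z l)ᵀ * A t)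
    -- `Z_t = A_t − ∑_{l<t} Z_l Γ_{l,t}` (for the first index the sum is empty, `Z_1 = A_1`)
    (hZ : ∀ t : Fin T, Z t = A t - ∑ l ∈ Finset.univ.filter (· < t), Z l * Γm l t)
    -- `β_t = Z_t⁺ y`
    (hβ : ∀ t : Fin T, β t = (((Z t)ᵀ * Z t)⁻¹ * (Z t)ᵀ).mulVec y)
    -- backward recurrence: `b_l = β_l − ∑_{s>l} Γ_{l,s} b_s` (so `b_T = β_T`)
    (hb : ∀ l : Fin T, b l = β l -
      ∑ s ∈ Finset.univ.filter (fun s => l < s), (Γm l s).mulVec (b s)) :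
    -- the blocks `Z₁,…,Z_T` are mutually orthogonal
    (∀ l t : Fin T, l ≠ t → (Z l)ᵀ * Z t = 0) ∧
      -- matching partial column spans
      (∀ t : Fin T,
        Submodule.span ℝ {v : Fin N → ℝ | ∃ l ≤ t, ∃ j, v = fun i => Z l i j} =
          Submodule.span ℝ {v : Fin N → ℝ | ∃ l ≤ t, ∃ j, v = fun i => A l i j}) ∧
      (∑ s, (A s).mulVec (b s) = ∑ s, (Z s).mulVec (β s)) ∧
      -- `∑ A_t b_t` is the orthogonal projection of `y` onto the column span of `A`
      (∑ s, (A s).mulVec (b s)) ∈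
        Submodule.span ℝ {v : Fin N → ℝ | ∃ l, ∃ j, v = fun i => A l i j} ∧
      (∀ (l : Fin T) (j : Fin c),
        ∑ i, A l i j * (y i - (∑ s, (A s).mulVec (b s)) i) = 0) ∧
      -- `b` is the unique least-squares solution
      (∀ w : Fin T → Fin c → ℝ,
        Real.sqrt (∑ i, (y i - ∑ s, ((A s).mulVec (b s)) i) ^ 2) ≤
          Real.sqrt (∑ i, (y i - ∑ s, ((A s).mulVec (w s)) i) ^ 2)) ∧
      (∀ w : Fin T → Fin c → ℝ,
        Real.sqrt (∑ i, (y i - ∑ s, ((A s).mulVec (w s)) i) ^ 2) =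
            Real.sqrt (∑ i, (y i - ∑ s, ((A s).mulVec (b s)) i) ^ 2) → w = b) := by

  classical
  -- injectivity of the concatenated matrix
  have hinj : ∀ g : Fin T × Fin c → ℝ,
      (∀ i, ∑ p : Fin T × Fin c, g p * A p.1 i p.2 = 0) → ∀ p, g p = 0 := by
    intro g hg
    refine Fintype.linearIndependent_iff.mp hli g ?_
    funext i
    simpa [Finset.sum_apply] using hg i
  -- representation of Z t columns in terms of A columns
  have rep : ∀ t : Fin T, ∃ G : Fin T × Fin c → Fin c → ℝ,
      (∀ p j, t < p.1 → G p j = 0) ∧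
      (∀ j0 j, G (t, j0) j = if j = j0 then 1 else 0) ∧
      (∀ i j, Z t i j = ∑ p : Fin T × Fin c, G p j * A p.1 i p.2) := by
    have main : ∀ n : ℕ, ∀ t : Fin T, t.val = n → ∃ G : Fin T × Fin c → Fin c → ℝ,
        (∀ p j, t < p.1 → G p j = 0) ∧
        (∀ j0 j, G (t, j0) j = if j = j0 then 1 else 0) ∧
        (∀ i j, Z t i j = ∑ p : Fin T × Fin c, G p j * A p.1 i p.2) := by
      intro n
      induction n using Nat.strong_induction_on with
      | _ n IH =>
        intro t ht
        have IH' : ∀ l : Fin T, l < t → ∃ G : Fin T × Fin c → Fin c → ℝ,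
            (∀ p j, l < p.1 → G p j = 0) ∧
            (∀ j0 j, G (l, j0) j = if j = j0 then 1 else 0) ∧
            (∀ i j, Z l i j = ∑ p : Fin T × Fin c, G p j * A p.1 i p.2) := by
          intro l hl
          exact IH l.val (ht ▸ hl) l rfl
        choose g hg0 hg1 hg2 using IH'
        set g' : Fin T → Fin T × Fin c → Fin c → ℝ :=
          fun l => if h : l < t then g l h else 0 with hg'
        refine ⟨fun p j => (if p = (t, j) then 1 else 0)
          - ∑ l ∈ Finset.univ.filter (· < t), ∑ k, g' l p k * Γm l t k j, ?_, ?_, ?_⟩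
        · intro p j hp
          dsimp only
          have h1 : (if p = (t, j) then (1:ℝ) else 0) = 0 := by
            rw [if_neg]; rintro rfl; exact lt_irrefl _ hp
          have h2 : ∀ l ∈ Finset.univ.filter (· < t), ∑ k, g' l p k * Γm l t k j = 0 := by
            intro l hl
            have hl' : l < t := by simpa using hl
            have : ∀ k, g' l p k = 0 := by
              intro k
              rw [hg']; simp only [dif_pos hl']
              exact hg0 l hl' p k (hl'.trans hp)
            simp [this]
          rw [h1, Finset.sum_eq_zero h2, sub_zero]
        · intro j0 j
          dsimp only
          have h2 : ∀ l ∈ Finset.univ.filter (· < t), ∑ k, g' l (t, j0) k * Γm l t k j = 0 := by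
            intro l hl
            have hl' : l < t := by simpa using hl
            have : ∀ k, g' l (t, j0) k = 0 := by
              intro k
              rw [hg']; simp only [dif_pos hl']
              exact hg0 l hl' (t, j0) k hl'
            simp [this]
          rw [Finset.sum_eq_zero h2, sub_zero]
          by_cases h : j = j0
          · simp [h, Prod.ext_iff]
          · simp [Prod.ext_iff, h, Ne.symm h]
        · intro i j
          dsimp only
          have hZt : Z t i j = A t i j - ∑ l ∈ Finset.univ.filter (· < t), (Z l * Γm l t) i j := by
            rw [hZ t]; simp [Matrix.sum_apply]
          rw [hZt]
          symm
          simp only [sub_mul]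
          rw [Finset.sum_sub_distrib]
          congr 1
          · simp only [ite_mul, one_mul, zero_mul]
            rw [Finset.sum_ite_eq' Finset.univ ((t, j) : Fin T × Fin c) (fun p => A p.1 i p.2)]
            simp
          · simp only [Finset.sum_mul]
            rw [Finset.sum_comm]
            refine Finset.sum_congr rfl ?_
            intro l hl
            have hl' : l < t := by simpa using hl
            rw [Matrix.mul_apply]
            rw [Finset.sum_comm]
            refine Finset.sum_congr rfl ?_
            intro k _
            rw [hg2 l hl' i k, Finset.sum_mul]
            refine Finset.sum_congr rfl ?_
            intro p _
            have hgl : g' l p k = g l hl' p k := by rw [hg']; simp [dif_pos hl']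
            rw [hgl]; ring
    exact fun t => main t.val t rfl
  -- columns of Z t are linearly independent
  have hZinj : ∀ t : Fin T, ∀ x : Fin c → ℝ, (Z t) *ᵥ x = 0 → x = 0 := by
    intro t x hx
    obtain ⟨G, hG0, hG1, hG2⟩ := rep t
    have h : ∀ p : Fin T × Fin c, (∑ j, G p j * x j) = 0 := by
      apply hinj
      intro i
      have : ∑ p : Fin T × Fin c, (∑ j, G p j * x j) * A p.1 i p.2
          = ∑ j, Z t i j * x j := by
        simp only [Finset.sum_mul]
        rw [Finset.sum_comm]
        refine Finset.sum_congr rfl ?_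
        intro j _
        rw [hG2 i j, Finset.sum_mul]
        exact Finset.sum_congr rfl fun p _ => by ring
      rw [this]
      have := congrFun hx i
      simpa [Matrix.mulVec, dotProduct] using this
    funext j0
    have := h (t, j0)
    simp only [hG1] at this
    simpa [ite_mul] using this
  -- Gram matrices are invertible
  have hGram : ∀ t : Fin T, IsUnit ((Z t)ᵀ * Z t).det := by
    intro t
    rw [isUnit_iff_ne_zero]
    intro h
    obtain ⟨v, hv0, hv⟩ := Matrix.exists_mulVec_eq_zero_iff.mpr h
    apply hv0
    apply hZinj t
    rw [← dotProduct_self_eq_zero]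
    have h1 : v ⬝ᵥ (((Z t)ᵀ * Z t) *ᵥ v) = 0 := by rw [hv]; simp
    rw [← Matrix.mulVec_mulVec, Matrix.dotProduct_mulVec, Matrix.vecMul_transpose] at h1
    exact h1
  have hGramMul : ∀ t : Fin T, ((Z t)ᵀ * Z t) * ((Z t)ᵀ * Z t)⁻¹ = 1 :=
    fun t => Matrix.mul_nonsing_inv _ (hGram t)
  -- mutual orthogonality
  have horthlt : ∀ t l : Fin T, l < t → (Z l)ᵀ * Z t = 0 := by
    have main : ∀ n : ℕ, ∀ t : Fin T, t.val = n → ∀ l, l < t → (Z l)ᵀ * Z t = 0 := by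
      intro n
      induction n using Nat.strong_induction_on with
      | _ n IH =>
        intro t ht l hl
        rw [hZ t, Matrix.mul_sub, Matrix.mul_sum]
        have hsum : ∑ k ∈ Finset.univ.filter (· < t), (Z l)ᵀ * (Z k * Γm k t)
            = (Z l)ᵀ * (Z l * Γm l t) := by
          apply Finset.sum_eq_single_of_mem l (by simp [hl])
          intro k hk hkl
          have hk' : k < t := by simpa using hk
          have hzz : (Z l)ᵀ * Z k = 0 := by
            rcases lt_or_gt_of_ne hkl with hc | hc
            · have h0 := IH l.val (ht ▸ hl) l rfl k hc
              calc (Z l)ᵀ * Z k = ((Z k)ᵀ * Z l)ᵀ := by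
                    rw [Matrix.transpose_mul, Matrix.transpose_transpose]
                _ = 0 := by rw [h0]; simp
            · exact IH k.val (ht ▸ hk') k rfl l hc
          rw [← Matrix.mul_assoc, hzz, Matrix.zero_mul]
        rw [hsum, hΓ l t hl]
        have : (Z l)ᵀ * (Z l * (((Z l)ᵀ * Z l)⁻¹ * (Z l)ᵀ * A t)) = (Z l)ᵀ * A t := by
          simp only [← Matrix.mul_assoc]
          rw [hGramMul l, Matrix.one_mul]
        rw [this, sub_self]
    exact fun t l h => main t.val t rfl l h
  have horthne : ∀ l t : Fin T, l ≠ t → (Z l)ᵀ * Z t = 0 := by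
    intro l t hlt
    rcases lt_or_gt_of_ne hlt with hc | hc
    · exact horthlt t l hc
    · have h0 := horthlt l t hc
      calc (Z l)ᵀ * Z t = ((Z t)ᵀ * Z l)ᵀ := by
            rw [Matrix.transpose_mul, Matrix.transpose_transpose]
        _ = 0 := by rw [h0]; simp
  -- A t in terms of Z
  have hAeq : ∀ t : Fin T, A t = Z t + ∑ l ∈ Finset.univ.filter (· < t), Z l * Γm l t := by
    intro t
    rw [hZ t, sub_add_cancel]
  -- mulVec commutes with finite sums of vectors
  have hmvsum : ∀ {m n : ℕ} (M : Matrix (Fin m) (Fin n) ℝ) {ι : Type} (s : Finset ι)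
      (f : ι → Fin n → ℝ), M *ᵥ (∑ x ∈ s, f x) = ∑ x ∈ s, M *ᵥ (f x) := by
    intro m n M ι s f
    funext i
    simp only [Matrix.mulVec, dotProduct, Finset.sum_apply, Finset.mul_sum]
    exact Finset.sum_comm
  have hsummv : ∀ {m n : ℕ} {ι : Type} (s : Finset ι) (M : ι → Matrix (Fin m) (Fin n) ℝ)
      (v : Fin n → ℝ), (∑ x ∈ s, M x) *ᵥ v = ∑ x ∈ s, (M x) *ᵥ v := by
    intro m n ι s M v
    funext i
    simp only [Matrix.mulVec, dotProduct, Finset.sum_apply, Matrix.sum_apply,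
      Finset.sum_mul]
    exact Finset.sum_comm
  -- sum identity
  have hsum3 : ∑ s, (A s).mulVec (b s) = ∑ s, (Z s).mulVec (β s) := by
    have hswap : ∑ s, ∑ l ∈ Finset.univ.filter (· < s), (Z l) *ᵥ ((Γm l s) *ᵥ (b s))
        = ∑ l, ∑ s ∈ Finset.univ.filter (fun s => l < s), (Z l) *ᵥ ((Γm l s) *ᵥ (b s)) := by
      apply Finset.sum_comm'
      intro s l
      simp
    calc ∑ s, (A s).mulVec (b s)
        = ∑ s, ((Z s) *ᵥ (b s) + ∑ l ∈ Finset.univ.filter (· < s), (Z l) *ᵥ ((Γm l s) *ᵥ (b s))) := by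
          refine Finset.sum_congr rfl ?_
          intro s _
          rw [hAeq s, Matrix.add_mulVec]
          congr 1
          rw [hsummv]
          exact Finset.sum_congr rfl fun l _ => (Matrix.mulVec_mulVec _ _ _).symm
      _ = ∑ s, (Z s) *ᵥ (b s) + ∑ l, ∑ s ∈ Finset.univ.filter (fun s => l < s), (Z l) *ᵥ ((Γm l s) *ᵥ (b s)) := by
          rw [Finset.sum_add_distrib, hswap]
      _ = ∑ l, ((Z l) *ᵥ (b l) + (Z l) *ᵥ (∑ s ∈ Finset.univ.filter (fun s => l < s), (Γm l s) *ᵥ (b s))) := by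
          rw [Finset.sum_add_distrib]
          congr 1
          exact Finset.sum_congr rfl fun l _ => (hmvsum _ _ _).symm
      _ = ∑ s, (Z s).mulVec (β s) := by
          refine Finset.sum_congr rfl ?_
          intro l _
          rw [← Matrix.mulVec_add]
          congr 1
          rw [hb l, sub_add_cancel]
  -- the residual
  set r : Fin N → ℝ := y - ∑ s, (Z s).mulVec (β s) with hr
  have hZr : ∀ l : Fin T, (Z l)ᵀ *ᵥ r = 0 := by
    intro l
    rw [hr]
    have : (Z l)ᵀ *ᵥ (y - ∑ s, (Z s).mulVec (β s))
        = (Z l)ᵀ *ᵥ y - ∑ s, ((Z l)ᵀ * Z s) *ᵥ (β s) := by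
      rw [Matrix.mulVec_sub, hmvsum ((Z l)ᵀ) Finset.univ (fun s => (Z s) *ᵥ (β s))]
      congr 1
      exact Finset.sum_congr rfl fun s _ => Matrix.mulVec_mulVec _ _ _
    rw [this]
    have hsingle : ∑ s, ((Z l)ᵀ * Z s) *ᵥ (β s) = ((Z l)ᵀ * Z l) *ᵥ (β l) := by
      apply Finset.sum_eq_single_of_mem l (Finset.mem_univ l)
      intro s _ hsl
      rw [horthne l s (Ne.symm hsl), Matrix.zero_mulVec]
    rw [hsingle, hβ l, Matrix.mulVec_mulVec]
    have : ((Z l)ᵀ * Z l) * (((Z l)ᵀ * Z l)⁻¹ * (Z l)ᵀ) = (Z l)ᵀ := by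
      simp only [← Matrix.mul_assoc]
      rw [hGramMul l, Matrix.one_mul]
    rw [this, sub_self]
  have hAr : ∀ l : Fin T, (A l)ᵀ *ᵥ r = 0 := by
    intro l
    rw [hAeq l, Matrix.transpose_add, Matrix.transpose_sum, Matrix.add_mulVec]
    rw [hZr l]
    have h0 : ∑ k ∈ Finset.univ.filter (· < l), ((Z k * Γm k l)ᵀ) *ᵥ r = 0 := by
      apply Finset.sum_eq_zero
      intro k _
      rw [Matrix.transpose_mul, ← Matrix.mulVec_mulVec, hZr k, Matrix.mulVec_zero]
    rw [hsummv, h0, add_zero]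
  -- pointwise facts about the residual
  have hAr' : ∀ (l : Fin T) (j : Fin c), ∑ i, A l i j * r i = 0 := by
    intro l j
    have := congrFun (hAr l) j
    simpa [Matrix.mulVec, dotProduct, Matrix.transpose_apply] using this
  have hry : ∀ i, y i - (∑ s, (Z s).mulVec (β s)) i = r i := by
    intro i; rw [hr]; simp
  have hyb : ∀ i, y i - ∑ s, ((A s).mulVec (b s)) i = r i := by
    intro i
    have h1 : ∑ s, ((A s).mulVec (b s)) i = (∑ s, (A s).mulVec (b s)) i :=
      (Finset.sum_apply _ _ _).symm
    rw [h1, hsum3]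
    exact hry i
  -- decomposition for arbitrary w
  have hd : ∀ (w : Fin T → Fin c → ℝ) (i : Fin N),
      y i - ∑ s, ((A s).mulVec (w s)) i
        = r i + ∑ s, ∑ j, A s i j * (b s j - w s j) := by
    intro w i
    have hDb : ∑ s, ∑ j, A s i j * (b s j - w s j)
        = ∑ s, ((A s).mulVec (b s)) i - ∑ s, ((A s).mulVec (w s)) i := by
      rw [← Finset.sum_sub_distrib]
      refine Finset.sum_congr rfl fun s _ => ?_
      simp [Matrix.mulVec, dotProduct, mul_sub, Finset.sum_sub_distrib]
    have h2 := hyb i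
    rw [hDb]
    linarith
  have hperp : ∀ w : Fin T → Fin c → ℝ,
      ∑ i, r i * (∑ s, ∑ j, A s i j * (b s j - w s j)) = 0 := by
    intro w
    have hrw : ∀ i, r i * (∑ s, ∑ j, A s i j * (b s j - w s j))
        = ∑ s, ∑ j, (b s j - w s j) * (A s i j * r i) := by
      intro i
      rw [Finset.mul_sum]
      refine Finset.sum_congr rfl fun s _ => ?_
      rw [Finset.mul_sum]
      exact Finset.sum_congr rfl fun j _ => by ring
    simp only [hrw]
    rw [Finset.sum_comm]
    refine Finset.sum_eq_zero fun s _ => ?_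
    rw [Finset.sum_comm]
    refine Finset.sum_eq_zero fun j _ => ?_
    rw [← Finset.mul_sum, hAr' s j, mul_zero]
  have hkey : ∀ w : Fin T → Fin c → ℝ,
      ∑ i, (y i - ∑ s, ((A s).mulVec (w s)) i) ^ 2
        = (∑ i, r i ^ 2) + ∑ i, (∑ s, ∑ j, A s i j * (b s j - w s j)) ^ 2 := by
    intro w
    have hterm : ∀ i, (y i - ∑ s, ((A s).mulVec (w s)) i) ^ 2
        = r i ^ 2 + (∑ s, ∑ j, A s i j * (b s j - w s j)) ^ 2
          + 2 * (r i * (∑ s, ∑ j, A s i j * (b s j - w s j))) := by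
      intro i; rw [hd w i]; ring
    rw [Finset.sum_congr rfl fun i _ => hterm i, Finset.sum_add_distrib,
      Finset.sum_add_distrib, ← Finset.mul_sum, hperp w, mul_zero, add_zero]
  have hbase : ∑ i, (y i - ∑ s, ((A s).mulVec (b s)) i) ^ 2 = ∑ i, r i ^ 2 :=
    Finset.sum_congr rfl fun i _ => by rw [hyb i]
  refine ⟨horthne, ?_, hsum3, ?_, ?_, ?_, ?_⟩
  · -- span equality
    intro t
    refine le_antisymm (Submodule.span_le.mpr ?_) (Submodule.span_le.mpr ?_)
    · rintro v ⟨l, hl, j, rfl⟩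
      obtain ⟨G, hG0, hG1, hG2⟩ := rep l
      have hcol : (fun i => Z l i j) = ∑ p : Fin T × Fin c, G p j • (fun i => A p.1 i p.2) := by
        funext i
        simp only [Finset.sum_apply, Pi.smul_apply, smul_eq_mul]
        exact hG2 i j
      rw [SetLike.mem_coe, hcol]
      refine Submodule.sum_mem _ fun p _ => ?_
      by_cases hp : G p j = 0
      · rw [hp]; simp
      · have hple : p.1 ≤ t := by
          by_contra hgt
          exact hp (hG0 p j (lt_of_le_of_lt hl (not_le.mp hgt)))
        exact Submodule.smul_mem _ _ (Submodule.subset_span ⟨p.1, hple, p.2, rfl⟩)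
    · rintro v ⟨l, hl, j, rfl⟩
      have hcol : (fun i => A l i j) = (fun i => Z l i j) +
          ∑ k ∈ Finset.univ.filter (· < l), ∑ m, Γm k l m j • (fun i => Z k i m) := by
        funext i
        simp only [Pi.add_apply, Finset.sum_apply, Pi.smul_apply, smul_eq_mul]
        rw [hAeq l]
        simp only [Matrix.add_apply, Matrix.sum_apply, Matrix.mul_apply]
        congr 1
        refine Finset.sum_congr rfl fun k _ => ?_
        exact Finset.sum_congr rfl fun m _ => mul_comm _ _
      rw [SetLike.mem_coe, hcol]
      refine Submodule.add_mem _ (Submodule.subset_span ⟨l, hl, j, rfl⟩) ?_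
      refine Submodule.sum_mem _ fun k hk => ?_
      have hk' : k < l := by simpa using hk
      refine Submodule.sum_mem _ fun m _ => ?_
      exact Submodule.smul_mem _ _
        (Submodule.subset_span ⟨k, le_of_lt (lt_of_lt_of_le hk' hl), m, rfl⟩)
  · -- membership in span of A columns
    refine Submodule.sum_mem _ fun s _ => ?_
    have hc : (A s) *ᵥ (b s) = ∑ j, b s j • (fun i => A s i j) := by
      funext i
      simp [Matrix.mulVec, dotProduct, Finset.sum_apply, mul_comm]
    rw [hc]
    exact Submodule.sum_mem _ fun j _ =>
      Submodule.smul_mem _ _ (Submodule.subset_span ⟨s, j, rfl⟩)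
  · -- orthogonality of the residual to columns of A
    intro l j
    rw [hsum3]
    simp only [hry]
    exact hAr' l j
  · -- least squares inequality
    intro w
    rw [hbase, hkey w]
    apply Real.sqrt_le_sqrt
    exact le_add_of_nonneg_right (Finset.sum_nonneg fun i _ => sq_nonneg _)
  · -- uniqueness
    intro w hw
    rw [hbase, hkey w] at hw
    have h1 := (Real.sqrt_inj (by positivity) (by positivity)).mp hw
    have h0 : ∑ i, (∑ s, ∑ j, A s i j * (b s j - w s j)) ^ 2 = 0 := by linarith
    have h2 : ∀ i, (∑ s, ∑ j, A s i j * (b s j - w s j)) = 0 := by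
      intro i
      have := (Finset.sum_eq_zero_iff_of_nonneg fun i _ => sq_nonneg _).mp h0 i (Finset.mem_univ i)
      exact (pow_eq_zero_iff (by norm_num)).mp this
    have h3 : ∀ p : Fin T × Fin c, b p.1 p.2 - w p.1 p.2 = 0 := by
      apply hinj
      intro i
      rw [Fintype.sum_prod_type, ← h2 i]
      exact Finset.sum_congr rfl fun s _ => Finset.sum_congr rfl fun j _ => mul_comm _ _
    funext s j
    have := h3 (s, j)
    dsimp at this
    linarith
end
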